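/- The one-state Turing machine M_cc with tape alphabet {⊔, u, U, h, 0, 1, Z, C, B}, halting symbol h, and transition table δ(u)=(U,R), δ(0)=(1,L), δ(U)=(C,R), δ(1)=(Z,R), δ(Z)=(0,L), δ(C)=(B,L), δ(B)=(C,R), δ(⊔)=(⊔,L) halts on input u^n 0^m h if and only if n ≥ 2^m − 1. -/

import Mathlib

inductive Dir : Type
  | L | R
deriving DecidableEq

def Dir.move : Dir → ℤ
  | .L => -1
  | .R => 1

/-- A one-state Turing machine: a blank symbol, a set of halting symbols
(as a Boolean predicate) and a transition function on the tape alphabet. -/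
structure OneStateTM (Γ : Type) where
  blank : Γ
  halt : Γ → Bool
  δ : Γ → Γ × Dir

/-- A configuration: a bi-infinite tape and a head position. -/
structure Cfg (Γ : Type) where
  tape : ℤ → Γ
  pos : ℤ

/-- One step of the machine; `none` means the machine has halted
(the head reads a halting symbol). -/
def OneStateTM.step {Γ : Type} (M : OneStateTM Γ) (c : Cfg Γ) : Option (Cfg Γ) :=
  if M.halt (c.tape c.pos) then none
  else some ⟨Function.update c.tape c.pos (M.δ (c.tape c.pos)).1,
             c.pos + (M.δ (c.tape c.pos)).2.move⟩

/-- Initial tape: the input written in cells 0,…,len−1, blanks elsewhere. -/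
def OneStateTM.initTape {Γ : Type} (M : OneStateTM Γ) (l : List Γ) : ℤ → Γ :=
  fun i => if i < 0 then M.blank else l.getD i.toNat M.blank

/-- The machine halts starting from configuration `c`. -/
def OneStateTM.HaltsFrom {Γ : Type} (M : OneStateTM Γ) (c : Cfg Γ) : Prop :=
  ∃ n : ℕ, (fun o => Option.bind o M.step)^[n] (some c) = none

/-- The machine halts on input `l` (head initially on the leftmost input symbol). -/
def OneStateTM.HaltsOn {Γ : Type} (M : OneStateTM Γ) (l : List Γ) : Prop :=
  M.HaltsFrom ⟨M.initTape l, 0⟩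

/-- The tape alphabet of M_cc: blank, u, U, h, 0, 1, Z, C, B. -/
inductive Tcc : Type
  | blank | u | bigU | h | z0 | one | Z | C | B
deriving DecidableEq

/-- The one-state Turing machine M_cc. -/
def Mcc : OneStateTM Tcc where
  blank := .blank
  halt := fun a => match a with | .h => true | _ => false
  δ := fun a => match a with
    | .u => (.bigU, .R)
    | .z0 => (.one, .L)
    | .bigU => (.C, .R)
    | .one => (.Z, .R)
    | .Z => (.z0, .L)
    | .C => (.B, .L)
    | .B => (.C, .R)
    | .blank => (.blank, .L)
    | .h => (.h, .R)   -- irrelevant: h is halting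

/-- The input u^n 0^m h. -/
def ccInput (n m : ℕ) : List Tcc :=
  List.replicate n .u ++ List.replicate m .z0 ++ [.h]

/-! The cells between the `U`/`C` block and `h` hold a binary counter, least significant bit
first. From the checkpoint `U^k C^j bits h` (head on the first bit) the head runs right over
the leading `1`s, turning them into `Z`, turns the first `0` into `1`, and sweeps back left,
restoring the `Z`s to `0`s and turning the `C`s into `B`s: the counter has been incremented.
A `U` to the left becomes `C` and sends the head right again, turning the `B`s back into `C`s,
which gives the checkpoint `U^(k-1) C^(j+1) bits' h`. If no `U` is left, the head enters the
blank region and walks left forever; if the counter is all `1`s, the head runs into `h`.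
The input `u^n 0^m h` reaches the checkpoint `U^n 0^m h`, and `0^m` needs `2^m - 1`
increments, each paid for by one `U`. -/

theorem List.replicate_succ_append_eq_append_cons {α : Type*} (a : ℕ) (x : α) (l : List α) :
    List.replicate (a + 1) x ++ l = List.replicate a x ++ x :: l := by
  rw [List.replicate_succ', List.append_assoc, List.singleton_append]

namespace OneStateTM

variable {Γ : Type} (M : OneStateTM Γ)

def Reaches : Cfg Γ → Cfg Γ → Prop :=
  Relation.ReflTransGen fun c c' => M.step c = some c'

variable {M}

theorem haltsFrom_iff_of_step_eq_some {c c' : Cfg Γ} (h : M.step c = some c') :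
    M.HaltsFrom c ↔ M.HaltsFrom c' := by
  constructor
  · rintro ⟨_ | n, hn⟩
    · cases hn
    · exact ⟨n, by rwa [Function.iterate_succ_apply, Option.bind_some, h] at hn⟩
  · rintro ⟨n, hn⟩
    exact ⟨n + 1, by rwa [Function.iterate_succ_apply, Option.bind_some, h]⟩

theorem haltsFrom_iff_of_reaches {c c' : Cfg Γ} (h : M.Reaches c c') :
    M.HaltsFrom c ↔ M.HaltsFrom c' := by
  induction h with
  | refl => rfl
  | tail _ hstep ih => exact ih.trans (haltsFrom_iff_of_step_eq_some hstep)

theorem haltsFrom_of_step_eq_none {c : Cfg Γ} (h : M.step c = none) : M.HaltsFrom c :=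
  ⟨1, h⟩

theorem not_haltsFrom_of_invariant (S : Set (Cfg Γ))
    (hS : ∀ c ∈ S, ∃ c' ∈ S, M.step c = some c') {c : Cfg Γ} (hc : c ∈ S) :
    ¬ M.HaltsFrom c := by
  suffices ∀ n, ∃ c' ∈ S, (fun o => Option.bind o M.step)^[n] (some c) = some c' by
    rintro ⟨n, hn⟩
    obtain ⟨c', -, hc'⟩ := this n
    simp [hn] at hc'
  intro n
  induction n with
  | zero => exact ⟨c, hc, rfl⟩
  | succ n ih =>
    obtain ⟨c', hc'S, hc'⟩ := ih
    obtain ⟨c'', hc''S, hc''⟩ := hS c' hc'S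
    exact ⟨c'', hc''S, by rw [Function.iterate_succ_apply', hc', Option.bind_some, hc'']⟩

theorem initTape_natCast (l : List Γ) (n : ℕ) : M.initTape l n = l.getD n M.blank := by
  simp [initTape]

theorem initTape_append_cons_length (l r : List Γ) (x : Γ) :
    M.initTape (l ++ x :: r) l.length = x := by
  simp [initTape_natCast]

theorem update_initTape_append_cons (l r : List Γ) (x y : Γ) :
    Function.update (M.initTape (l ++ x :: r)) l.length y = M.initTape (l ++ y :: r) := by
  funext i
  rcases eq_or_ne i l.length with rfl | hi
  · simp [initTape_append_cons_length]
  · rw [Function.update_of_ne hi]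
    unfold initTape
    split_ifs
    · rfl
    · have hne : l.length ≠ i.toNat := by omega
      have hset : l ++ y :: r = (l ++ x :: r).set l.length y := by simp
      rw [hset, List.getD_eq_getElem?_getD, List.getD_eq_getElem?_getD,
        List.getElem?_set_ne hne]

variable (M) in
/-- A tape zipper: `L` lists the cells left of the head, nearest first. -/
def cfgAt (L R : List Γ) : Cfg Γ := ⟨M.initTape (L.reverse ++ R), L.length⟩

variable (M) in
/-- The head on the first cell of `L`; for `L = []` this is the blank cell `-1`. -/
def cfgLeftOf (L R : List Γ) : Cfg Γ := ⟨M.initTape (L.reverse ++ R), L.length - 1⟩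

theorem haltsOn_iff_haltsFrom_cfgAt_nil (l : List Γ) :
    M.HaltsOn l ↔ M.HaltsFrom (M.cfgAt [] l) :=
  Iff.rfl

theorem cfgAt_eq (L R : List Γ) :
    M.cfgAt L R = ⟨M.initTape (L.reverse ++ R), L.reverse.length⟩ := by
  simp [cfgAt]

theorem cfgLeftOf_cons (c : Γ) (L R : List Γ) :
    M.cfgLeftOf (c :: L) R = M.cfgAt L (c :: R) := by
  simp [cfgLeftOf, cfgAt]

theorem step_cfgAt_eq_none {x : Γ} (hx : M.halt x = true) (L R : List Γ) :
    M.step (M.cfgAt L (x :: R)) = none := by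
  simp only [step, cfgAt_eq, initTape_append_cons_length, hx, if_true]

theorem step_cfgAt_of_right {x y : Γ} (hx : M.halt x = false) (hδ : M.δ x = (y, .R))
    (L R : List Γ) : M.step (M.cfgAt L (x :: R)) = some (M.cfgAt (y :: L) R) := by
  simp only [step, cfgAt_eq, initTape_append_cons_length, update_initTape_append_cons, hx, hδ]
  simp [Dir.move]

theorem step_cfgAt_of_left {x y : Γ} (hx : M.halt x = false) (hδ : M.δ x = (y, .L))
    (L R : List Γ) : M.step (M.cfgAt L (x :: R)) = some (M.cfgLeftOf L (y :: R)) := by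
  simp only [step, cfgAt_eq, cfgLeftOf, initTape_append_cons_length,
    update_initTape_append_cons, hx, hδ]
  simp [Dir.move, sub_eq_add_neg]

theorem reaches_cfgAt_replicate {s t : Γ} (hs : M.halt s = false) (hδ : M.δ s = (t, .R))
    (a : ℕ) (L R : List Γ) :
    M.Reaches (M.cfgAt L (List.replicate a s ++ R)) (M.cfgAt (List.replicate a t ++ L) R) := by
  induction a generalizing L with
  | zero => exact .refl
  | succ a ih =>
    rw [List.replicate_succ_append_eq_append_cons a t, List.replicate_succ, List.cons_append]
    exact .head (step_cfgAt_of_right hs hδ L _) (ih (t :: L))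

theorem reaches_cfgLeftOf_replicate {s t : Γ} (hs : M.halt s = false) (hδ : M.δ s = (t, .L))
    (a : ℕ) (L R : List Γ) :
    M.Reaches (M.cfgLeftOf (List.replicate a s ++ L) R)
      (M.cfgLeftOf L (List.replicate a t ++ R)) := by
  induction a generalizing R with
  | zero => exact .refl
  | succ a ih =>
    rw [List.replicate_succ_append_eq_append_cons a t, List.replicate_succ, List.cons_append,
      cfgLeftOf_cons]
    exact .head (step_cfgAt_of_left hs hδ _ R) (ih (t :: R))

theorem not_haltsFrom_cfgLeftOf_nil (hb : M.halt M.blank = false)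
    (hδ : M.δ M.blank = (M.blank, .L)) (R : List Γ) : ¬ M.HaltsFrom (M.cfgLeftOf [] R) := by
  refine not_haltsFrom_of_invariant {c | c.tape = M.initTape R ∧ c.pos < 0}
    (fun c ⟨htape, hpos⟩ => ?_) ⟨by simp [cfgLeftOf], by simp [cfgLeftOf]⟩
  have hblank : c.tape c.pos = M.blank := by simp [htape, initTape, hpos]
  refine ⟨⟨c.tape, c.pos - 1⟩, ⟨htape, show c.pos - 1 < 0 by omega⟩, ?_⟩
  simp [step, hblank, hb, hδ, Dir.move, sub_eq_add_neg]

end OneStateTM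

namespace Mcc

open OneStateTM

def bit (b : Bool) : Tcc := bif b then .one else .z0

/-- The binary value of the complemented little-endian bit string, i.e. the number of
increments that turn `bits` into all ones. -/
def incrementsLeft : List Bool → ℕ
  | [] => 0
  | b :: bs => 2 * incrementsLeft bs + bif b then 0 else 1

theorem incrementsLeft_replicate_true (a : ℕ) : incrementsLeft (List.replicate a true) = 0 := by
  induction a with
  | zero => rfl
  | succ a ih => simp [List.replicate_succ, incrementsLeft, ih]

theorem incrementsLeft_replicate_false (m : ℕ) :
    incrementsLeft (List.replicate m false) = 2 ^ m - 1 := by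
  induction m with
  | zero => rfl
  | succ m ih =>
    simp only [List.replicate_succ, incrementsLeft, ih, cond_false, pow_succ]
    have := Nat.one_le_two_pow (n := m)
    omega

theorem incrementsLeft_increment (a : ℕ) (rest : List Bool) :
    incrementsLeft (List.replicate a true ++ false :: rest) =
      incrementsLeft (List.replicate a false ++ true :: rest) + 1 := by
  induction a with
  | zero => simp [incrementsLeft]
  | succ a ih =>
    simp only [List.replicate_succ, List.cons_append, incrementsLeft, ih, cond_true, cond_false]
    ring

theorem eq_replicate_true_or_exists (bits : List Bool) :
    (∃ a, bits = List.replicate a true) ∨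
      ∃ a rest, bits = List.replicate a true ++ false :: rest := by
  induction bits with
  | nil => exact .inl ⟨0, rfl⟩
  | cons b bs ih =>
    cases b with
    | false => exact .inr ⟨0, bs, rfl⟩
    | true =>
      rcases ih with ⟨a, rfl⟩ | ⟨a, rest, rfl⟩
      · exact .inl ⟨a + 1, rfl⟩
      · exact .inr ⟨a + 1, rest, rfl⟩

/-- The tape `U^k C^j bits h` with the head on the first bit. -/
def checkpoint (k j : ℕ) (bits : List Bool) : Cfg Tcc :=
  Mcc.cfgAt (List.replicate j .C ++ List.replicate k .bigU) (bits.map bit ++ [.h])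

theorem haltsFrom_checkpoint_replicate_true (k j a : ℕ) :
    Mcc.HaltsFrom (checkpoint k j (List.replicate a true)) := by
  have hsweep : Mcc.Reaches (checkpoint k j (List.replicate a true))
      (Mcc.cfgAt (List.replicate a .Z ++ (List.replicate j .C ++ List.replicate k .bigU)) [.h]) := by
    simpa [checkpoint, bit] using reaches_cfgAt_replicate (M := Mcc) (s := .one) rfl rfl a _ [.h]
  rw [haltsFrom_iff_of_reaches hsweep]
  exact haltsFrom_of_step_eq_none (step_cfgAt_eq_none rfl _ _)

theorem checkpoint_reaches_increment (k j a : ℕ) (rest : List Bool) :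
    Mcc.Reaches (checkpoint k j (List.replicate a true ++ false :: rest))
      (Mcc.cfgLeftOf (List.replicate k .bigU)
        (List.replicate j .B ++ (List.replicate a false ++ true :: rest).map bit ++ [.h])) := by
  simp only [checkpoint, List.map_append, List.map_replicate, List.map_cons, bit, cond_true,
    cond_false, List.append_assoc, List.cons_append]
  exact (reaches_cfgAt_replicate rfl rfl a _ _).trans <|
    .head (step_cfgAt_of_left rfl rfl _ _) <|
    (reaches_cfgLeftOf_replicate rfl rfl a _ _).trans
    (reaches_cfgLeftOf_replicate rfl rfl j _ _)

theorem reaches_checkpoint (k j : ℕ) (bits : List Bool) :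
    Mcc.Reaches (Mcc.cfgLeftOf (List.replicate (k + 1) .bigU)
        (List.replicate j .B ++ bits.map bit ++ [.h]))
      (checkpoint k (j + 1) bits) := by
  rw [List.replicate_succ, cfgLeftOf_cons, checkpoint, List.append_assoc,
    List.replicate_succ_append_eq_append_cons]
  exact .head (step_cfgAt_of_right rfl rfl _ _) (reaches_cfgAt_replicate rfl rfl j _ _)

theorem haltsFrom_checkpoint_iff (k j : ℕ) (bits : List Bool) :
    Mcc.HaltsFrom (checkpoint k j bits) ↔ incrementsLeft bits ≤ k := by
  rcases eq_replicate_true_or_exists bits with ⟨a, rfl⟩ | ⟨a, rest, rfl⟩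
  · simpa [incrementsLeft_replicate_true] using haltsFrom_checkpoint_replicate_true k j a
  rw [haltsFrom_iff_of_reaches (checkpoint_reaches_increment k j a rest),
    incrementsLeft_increment]
  cases k with
  | zero => exact iff_of_false (not_haltsFrom_cfgLeftOf_nil rfl rfl _) (by omega)
  | succ k =>
    rw [haltsFrom_iff_of_reaches (reaches_checkpoint k j _), haltsFrom_checkpoint_iff k (j + 1)]
    omega

end Mcc

/-- M_cc halts on input u^n 0^m h iff n ≥ 2^m − 1. -/
theorem Mcc_halts_iff : ∀ n m : ℕ, Mcc.HaltsOn (ccInput n m) ↔ 2 ^ m - 1 ≤ n := by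
  intro n m
  have hstart : Mcc.Reaches (Mcc.cfgAt [] (ccInput n m))
      (Mcc.checkpoint n 0 (List.replicate m false)) := by
    simpa [ccInput, Mcc.checkpoint, Mcc.bit] using
      OneStateTM.reaches_cfgAt_replicate (M := Mcc) (s := .u) (t := .bigU) rfl rfl n [] _
  rw [OneStateTM.haltsOn_iff_haltsFrom_cfgAt_nil, OneStateTM.haltsFrom_iff_of_reaches hstart,
    Mcc.haltsFrom_checkpoint_iff, Mcc.incrementsLeft_replicate_false]
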